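/- arXiv:1910.08595 — 8 statements merged into one kernel-verified Lean document; each statement's English description precedes it below -/
import Mathlib

section
/- Let n ≥ 1, let x ∈ ℝⁿ, and let (B_i)_{i≥1} be a sequence of open balls B_i = B(q_i, r_i) in ℝⁿ, each containing x, whose radii r_i are unbounded above. Then the union B = ⋃_{i≥1} B_i contains an open halfspace H with x on its boundary; that is, there exists a nonzero vector u ∈ ℝⁿ such that {y ∈ ℝⁿ : ⟪u, y − x⟫ > 0} ⊆ ⋃_{i≥1} B(q_i, r_i). -/
open Metric RealInnerProductSpace

/-- If `x ∈ ℝⁿ` and `(B(qᵢ, rᵢ))` is a sequence of open balls each containing `x` whose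
radii are unbounded above, then the union of the balls contains an open halfspace with
`x` on its boundary. -/
theorem unbounded_balls_union_contains_halfspace
    (n : ℕ) (hn : 1 ≤ n) (x : EuclideanSpace ℝ (Fin n))
    (q : ℕ → EuclideanSpace ℝ (Fin n)) (r : ℕ → ℝ)
    (hx : ∀ i, x ∈ ball (q i) (r i))
    (hub : ∀ M : ℝ, ∃ i, M < r i) :
    ∃ u : EuclideanSpace ℝ (Fin n), u ≠ 0 ∧
      {y : EuclideanSpace ℝ (Fin n) | ⟪u, y - x⟫ > 0} ⊆ ⋃ i, ball (q i) (r i) := by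
  by_cases hcov : ∀ R : ℝ, ∃ i, dist (q i) x + R < r i
  · -- the union is all of space
    refine ⟨EuclideanSpace.single ⟨0, hn⟩ (1 : ℝ), ?_, ?_⟩
    · intro h
      have := congrArg (fun z => z ⟨0, hn⟩) h
      simp [EuclideanSpace.single_apply] at this
    · intro y _
      obtain ⟨i, hi⟩ := hcov (dist y x)
      refine Set.mem_iUnion.2 ⟨i, ?_⟩
      have : dist y (q i) ≤ dist y x + dist x (q i) := dist_triangle _ _ _
      rw [mem_ball]
      have h2 : dist x (q i) = dist (q i) x := dist_comm _ _
      linarith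
  · push_neg at hcov
    obtain ⟨R, hR⟩ := hcov
    have hd : ∀ M : ℝ, ∃ i, M < dist (q i) x := by
      intro M
      obtain ⟨i, hi⟩ := hub (M + R)
      exact ⟨i, by linarith [hR i]⟩
    choose ψ hψ using fun k : ℕ => hd k
    have dpos : ∀ k : ℕ, 0 < dist (q (ψ k)) x :=
      fun k => lt_of_le_of_lt (Nat.cast_nonneg k) (hψ k)
    set v : ℕ → EuclideanSpace ℝ (Fin n) :=
      fun k => (dist (q (ψ k)) x)⁻¹ • (q (ψ k) - x) with hv_def
    have hnormv : ∀ k, ‖v k‖ = 1 := by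
      intro k
      rw [hv_def]
      simp only [norm_smul, Real.norm_eq_abs, abs_inv,
        abs_of_pos (dpos k), ← dist_eq_norm]
      exact inv_mul_cancel₀ (dpos k).ne'
    have hvs : ∀ k, v k ∈ sphere (0 : EuclideanSpace ℝ (Fin n)) 1 := by
      intro k; simpa [mem_sphere_iff_norm] using hnormv k
    obtain ⟨u, hu, φ, hφ, hconv⟩ :=
      (isCompact_sphere (0 : EuclideanSpace ℝ (Fin n)) 1).tendsto_subseq hvs
    have hunorm : ‖u‖ = 1 := by simpa [mem_sphere_iff_norm] using hu
    refine ⟨u, by simp [← norm_ne_zero_iff, hunorm], ?_⟩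
    intro y hy
    set w : EuclideanSpace ℝ (Fin n) := y - x with hw
    have hc : (0 : ℝ) < ⟪u, w⟫ := hy
    set c : ℝ := ⟪u, w⟫ with hcdef
    have hε : (0 : ℝ) < c / (2 * (‖w‖ + 1)) := by
      apply div_pos hc
      positivity
    obtain ⟨N, hN⟩ := (Metric.tendsto_atTop.1 hconv) _ hε
    set k0 : ℕ := max N ⌈‖w‖ ^ 2 / c⌉₊ with hk0
    have hk0N : N ≤ k0 := le_max_left _ _
    have hk0c : ‖w‖ ^ 2 ≤ (k0 : ℝ) * c := by
      have h1 : ‖w‖ ^ 2 / c ≤ (⌈‖w‖ ^ 2 / c⌉₊ : ℝ) := Nat.le_ceil _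
      have h2 : (⌈‖w‖ ^ 2 / c⌉₊ : ℝ) ≤ (k0 : ℝ) := by
        exact_mod_cast le_max_right N _
      rw [div_le_iff₀ hc] at h1
      nlinarith
    set i : ℕ := ψ (φ k0) with hi
    set D : ℝ := dist (q i) x with hD
    have hDk : (k0 : ℝ) < D := by
      have h1 : (k0 : ℝ) ≤ (φ k0 : ℝ) := by exact_mod_cast hφ.le_apply
      exact lt_of_le_of_lt h1 (hψ (φ k0))
    have hDpos : 0 < D := dpos (φ k0)
    -- inner product estimate
    have hclose : dist (v (φ k0)) u < c / (2 * (‖w‖ + 1)) := hN k0 hk0N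
    have hinner : c / 2 ≤ ⟪v (φ k0), w⟫ := by
      have h1 : ⟪v (φ k0) - u, w⟫ ≥ -(‖v (φ k0) - u‖ * ‖w‖) := by
        have := abs_real_inner_le_norm (v (φ k0) - u) w
        have := neg_abs_le ⟪v (φ k0) - u, w⟫
        linarith
      have h2 : ‖v (φ k0) - u‖ * ‖w‖ ≤ c / 2 := by
        have hd' : ‖v (φ k0) - u‖ < c / (2 * (‖w‖ + 1)) := by
          rwa [dist_eq_norm] at hclose
        have hwn : (0 : ℝ) ≤ ‖w‖ := norm_nonneg _
        have : ‖v (φ k0) - u‖ * ‖w‖ ≤ (c / (2 * (‖w‖ + 1))) * ‖w‖ := by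
          apply mul_le_mul_of_nonneg_right hd'.le hwn
        calc ‖v (φ k0) - u‖ * ‖w‖ ≤ (c / (2 * (‖w‖ + 1))) * ‖w‖ := this
          _ ≤ c / 2 := by
            rw [div_mul_eq_mul_div, div_le_div_iff₀ (by positivity) (by norm_num)]
            nlinarith
      have h3 : ⟪v (φ k0), w⟫ = c + ⟪v (φ k0) - u, w⟫ := by
        rw [inner_sub_left]; ring
      linarith
    -- the key computation
    have hq : q i - x = D • v (φ k0) := by
      rw [hv_def]
      rw [smul_smul, mul_inv_cancel₀ (ne_of_gt hDpos), one_smul]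
    have hyq : y - q i = w - D • v (φ k0) := by
      rw [← hq, hw]; abel
    have hsq : ‖y - q i‖ ^ 2 = ‖w‖ ^ 2 - 2 * (D * ⟪w, v (φ k0)⟫) + D ^ 2 := by
      rw [hyq, @norm_sub_sq_real, real_inner_smul_right, norm_smul]
      simp [hnormv (φ k0), abs_of_pos hDpos]
    have hsym : ⟪w, v (φ k0)⟫ = ⟪v (φ k0), w⟫ := real_inner_comm _ _
    have hlt : ‖y - q i‖ ^ 2 < D ^ 2 := by
      rw [hsq, hsym]
      have : ‖w‖ ^ 2 < 2 * (D * (c / 2)) := by nlinarith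
      nlinarith
    have hfin : ‖y - q i‖ < D := lt_of_pow_lt_pow_left₀ 2 hDpos.le hlt
    refine Set.mem_iUnion.2 ⟨i, ?_⟩
    rw [mem_ball, dist_eq_norm]
    have hir : D < r i := by
      have := hx i
      rw [mem_ball] at this
      rw [hD, dist_comm]; exact this
    linarith
end

section
/- Let n ≥ 1, let S ⊆ ℝⁿ, and let x ∈ S be a point at which the coverage of S is infinite, i.e., for every r > 0 there exist q ∈ ℝⁿ and s > r with x ∈ B(q, s) ⊆ S. Then S contains an open halfspace H with x on its boundary; that is, there exists a nonzero vector u ∈ ℝⁿ such that {y ∈ ℝⁿ : ⟪u, y − x⟫ > 0} ⊆ S. -/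
/-!
Every anchor `B(q, s)` of `x` contains the ball of radius `s / 2` through `x` whose centre lies
on the ray from `x` through `q`. Along anchors with `s → ∞`, the unit directions of these
tangent balls cluster at some `u` by compactness of the sphere. A point `y` lies in the
tangent ball of radius `ρ` and direction `v` as soon as `‖y - x‖² < 2ρ⟪v, y - x⟫`, which for
`⟪u, y - x⟫ > 0` holds once `ρ` is large and `v` is close to `u`.
-/

open Metric RealInnerProductSpace Filter Topology

section

variable {E : Type*} [NormedAddCommGroup E] [InnerProductSpace ℝ E]

lemma exists_norm_eq_one_and_norm_smul_eq [Nontrivial E] (w : E) :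
    ∃ v : E, ‖v‖ = 1 ∧ ‖w‖ • v = w := by
  by_cases hw : w = 0
  · obtain ⟨v, hv⟩ := exists_norm_eq E zero_le_one
    exact ⟨v, hv, by simp [hw]⟩
  · exact ⟨NormedSpace.normalize w, NormedSpace.norm_normalize hw,
      NormedSpace.norm_smul_normalize w⟩

lemma exists_norm_eq_one_and_ball_half_subset_ball [Nontrivial E] {x q : E} {s : ℝ}
    (hx : x ∈ ball q s) :
    ∃ v : E, ‖v‖ = 1 ∧ ball (x + (s / 2) • v) (s / 2) ⊆ ball q s := by
  obtain ⟨v, hv, hqx⟩ := exists_norm_eq_one_and_norm_smul_eq (q - x)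
  refine ⟨v, hv, ball_subset_ball' ?_⟩
  have hcenter : x + (s / 2) • v - q = (s / 2 - ‖q - x‖) • v := by
    rw [sub_smul, hqx]; abel
  have hd : ‖q - x‖ < s := by rwa [norm_sub_rev, ← dist_eq_norm]
  have habs : |s / 2 - ‖q - x‖| ≤ s / 2 :=
    abs_sub_le_iff.2 ⟨by linarith [norm_nonneg (q - x)], by linarith⟩
  rw [dist_eq_norm, hcenter, norm_smul, hv, mul_one, Real.norm_eq_abs]
  linarith

lemma mem_ball_add_smul_of_sq_lt {x y v : E} {ρ : ℝ} (hv : ‖v‖ = 1) (hρ : 0 < ρ)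
    (h : ‖y - x‖ ^ 2 < 2 * ρ * ⟪v, y - x⟫) :
    y ∈ ball (x + ρ • v) ρ := by
  have hsq : ‖y - x - ρ • v‖ ^ 2 < ρ ^ 2 := by
    rw [norm_sub_sq_real, real_inner_smul_right, real_inner_comm, norm_smul, hv,
      Real.norm_of_nonneg hρ.le]
    nlinarith
  rw [mem_ball, dist_eq_norm, ← sub_sub]
  exact lt_of_pow_lt_pow_left₀ 2 hρ.le hsq

lemma halfspace_subset_of_tangent_balls {ι : Type*} {l : Filter ι} {S : Set E} {x u : E}
    {v : ι → E} {ρ : ι → ℝ} (hv : ∀ i, ‖v i‖ = 1) (hu : MapClusterPt u l v)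
    (hρ : Tendsto ρ l atTop) (hS : ∀ i, ball (x + ρ i • v i) (ρ i) ⊆ S) :
    {y | 0 < ⟪u, y - x⟫} ⊆ S := by
  intro y hy
  set ε := ⟪u, y - x⟫
  have hinner : ∀ᶠ w in 𝓝 u, ε / 2 < ⟪w, y - x⟫ :=
    (continuous_id.inner continuous_const).continuousAt.eventually
      (eventually_gt_nhds (half_lt_self hy))
  have hlarge : ∀ᶠ i in l, 0 < ρ i ∧ ‖y - x‖ ^ 2 / ε < ρ i :=
    (hρ.eventually_gt_atTop 0).and (hρ.eventually_gt_atTop _)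
  obtain ⟨i, hi, hρpos, hρi⟩ := ((hu.frequently hinner).and_eventually hlarge).exists
  refine hS i (mem_ball_add_smul_of_sq_lt (hv i) hρpos ?_)
  rw [div_lt_iff₀ hy] at hρi
  nlinarith

end

theorem infinite_coverage_label_contains_halfspace_general
    (n : ℕ) (hn : 1 ≤ n) (S : Set (EuclideanSpace ℝ (Fin n)))
    (x : EuclideanSpace ℝ (Fin n))
    (hcov : ∀ r : ℝ, 0 < r → ∃ (q : EuclideanSpace ℝ (Fin n)) (s : ℝ),
      r < s ∧ x ∈ ball q s ∧ ball q s ⊆ S) :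
    ∃ u : EuclideanSpace ℝ (Fin n), u ≠ 0 ∧
      {y : EuclideanSpace ℝ (Fin n) | ⟪u, y - x⟫ > 0} ⊆ S := by
  have : NeZero n := ⟨by omega⟩
  choose q s hs hx hsub using fun k : ℕ => hcov (k + 1) k.cast_add_one_pos
  choose v hv hball using fun k => exists_norm_eq_one_and_ball_half_subset_ball (hx k)
  obtain ⟨u, hu, hcluster⟩ :=
    (isCompact_sphere (0 : EuclideanSpace ℝ (Fin n)) 1).exists_mapClusterPt (f := atTop)
      (tendsto_principal.2 (.of_forall fun k => by simpa using hv k))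
  have hs_top : Tendsto s atTop atTop :=
    tendsto_atTop_mono (fun k => by linarith [hs k]) tendsto_natCast_atTop_atTop
  refine ⟨u, ne_zero_of_mem_unit_sphere ⟨u, hu⟩, ?_⟩
  exact halfspace_subset_of_tangent_balls hv hcluster (hs_top.atTop_div_const two_pos)
    fun k => (hball k).trans (hsub k)

/-- If `S ⊆ ℝⁿ` has infinite coverage at `x ∈ S` (anchors of arbitrarily large radius
exist for `x`), then `S` contains an open halfspace with `x` on its boundary. -/
theorem infinite_coverage_label_contains_halfspace
    (n : ℕ) (hn : 1 ≤ n) (S : Set (EuclideanSpace ℝ (Fin n)))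
    (x : EuclideanSpace ℝ (Fin n)) (hxS : x ∈ S)
    (hcov : ∀ r : ℝ, 0 < r → ∃ (q : EuclideanSpace ℝ (Fin n)) (s : ℝ),
      r < s ∧ x ∈ ball q s ∧ ball q s ⊆ S) :
    ∃ u : EuclideanSpace ℝ (Fin n), u ≠ 0 ∧
      {y : EuclideanSpace ℝ (Fin n) | ⟪u, y - x⟫ > 0} ⊆ S :=
  infinite_coverage_label_contains_halfspace_general n hn S x hcov
end

section
/- Let n ≥ 1 and let u₁, u₂, u₃ be nonzero vectors in ℝⁿ and c₁, c₂, c₃ real numbers. Then the three open halfspaces H_i = {y ∈ ℝⁿ : ⟪u_i, y⟫ > c_i} (i = 1, 2, 3) cannot be pairwise disjoint; that is, at least one of the intersections H₁ ∩ H₂, H₁ ∩ H₃, H₂ ∩ H₃ is nonempty. -/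
/-!
Two open halfspaces `⟪u, y⟫ > c`, `⟪v, y⟫ > d` with nonzero normals meet unless `u` and `v`
point in opposite directions: otherwise `y = ‖v‖ • u + ‖u‖ • v` has positive inner product with
both normals, and a large multiple of it lies in both halfspaces. But three nonzero vectors cannot
be pairwise opposite, since `angle u₁ u₂ = π` forces `angle u₁ u₃ + angle u₂ u₃ = π`.
-/

open RealInnerProductSpace InnerProductGeometry Filter Real

variable {E : Type*} [NormedAddCommGroup E] [InnerProductSpace ℝ E]

theorem exists_inner_pos_inner_pos_of_angle_ne_pi {u v : E} (hu : u ≠ 0) (hv : v ≠ 0)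
    (huv : angle u v ≠ π) : ∃ y : E, 0 < ⟪u, y⟫ ∧ 0 < ⟪v, y⟫ := by
  have hu' : 0 < ‖u‖ := norm_pos_iff.mpr hu
  have hv' : 0 < ‖v‖ := norm_pos_iff.mpr hv
  have hgap : 0 < ‖u‖ * ‖v‖ + ⟪u, v⟫ := by
    have hcs : -(‖u‖ * ‖v‖) ≤ ⟪u, v⟫ := neg_le_of_abs_le (abs_real_inner_le_norm u v)
    have hne : ⟪u, v⟫ ≠ -(‖u‖ * ‖v‖) := (inner_eq_neg_mul_norm_iff_angle_eq_pi hu hv).not.mpr huv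
    linarith [lt_of_le_of_ne hcs hne.symm]
  refine ⟨‖v‖ • u + ‖u‖ • v, ?_, ?_⟩
  · have : ⟪u, ‖v‖ • u + ‖u‖ • v⟫ = ‖u‖ * (‖u‖ * ‖v‖ + ⟪u, v⟫) := by
      rw [inner_add_right, real_inner_smul_right, real_inner_smul_right,
        real_inner_self_eq_norm_sq]
      ring
    rw [this]
    positivity
  · have : ⟪v, ‖v‖ • u + ‖u‖ • v⟫ = ‖v‖ * (‖u‖ * ‖v‖ + ⟪u, v⟫) := by
      rw [inner_add_right, real_inner_smul_right, real_inner_smul_right,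
        real_inner_self_eq_norm_sq, real_inner_comm]
      ring
    rw [this]
    positivity

theorem exists_inner_gt_inner_gt_of_inner_pos {u v y : E} (hu : 0 < ⟪u, y⟫) (hv : 0 < ⟪v, y⟫)
    (c d : ℝ) : ∃ x : E, c < ⟪u, x⟫ ∧ d < ⟪v, x⟫ := by
  have hlarge : ∀ᶠ s : ℝ in atTop, c < s * ⟪u, y⟫ ∧ d < s * ⟪v, y⟫ :=
    ((tendsto_id.atTop_mul_const hu).eventually_gt_atTop c).and
      ((tendsto_id.atTop_mul_const hv).eventually_gt_atTop d)
  obtain ⟨s, hs⟩ := hlarge.exists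
  exact ⟨s • y, by simpa only [real_inner_smul_right] using hs⟩

theorem halfspace_inter_halfspace_nonempty_of_angle_ne_pi {u v : E} (hu : u ≠ 0) (hv : v ≠ 0)
    (huv : angle u v ≠ π) (c d : ℝ) :
    ({y : E | ⟪u, y⟫ > c} ∩ {y : E | ⟪v, y⟫ > d}).Nonempty := by
  obtain ⟨y, hyu, hyv⟩ := exists_inner_pos_inner_pos_of_angle_ne_pi hu hv huv
  exact exists_inner_gt_inner_gt_of_inner_pos hyu hyv c d

theorem three_halfspaces_not_pairwise_disjoint_general
    (n : ℕ) (u₁ u₂ u₃ : EuclideanSpace ℝ (Fin n))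
    (h₁ : u₁ ≠ 0) (h₂ : u₂ ≠ 0) (h₃ : u₃ ≠ 0) (c₁ c₂ c₃ : ℝ) :
    ({y : EuclideanSpace ℝ (Fin n) | ⟪u₁, y⟫ > c₁} ∩
      {y : EuclideanSpace ℝ (Fin n) | ⟪u₂, y⟫ > c₂}).Nonempty ∨
    ({y : EuclideanSpace ℝ (Fin n) | ⟪u₁, y⟫ > c₁} ∩
      {y : EuclideanSpace ℝ (Fin n) | ⟪u₃, y⟫ > c₃}).Nonempty ∨
    ({y : EuclideanSpace ℝ (Fin n) | ⟪u₂, y⟫ > c₂} ∩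
      {y : EuclideanSpace ℝ (Fin n) | ⟪u₃, y⟫ > c₃}).Nonempty := by
  by_cases h₁₂ : angle u₁ u₂ = π
  · have hsum := angle_add_angle_eq_pi_of_angle_eq_pi u₃ h₁₂
    by_cases h₁₃ : angle u₁ u₃ = π
    · have h₂₃ : angle u₂ u₃ ≠ π := by
        intro h₂₃
        linarith [pi_pos]
      exact .inr <| .inr <| halfspace_inter_halfspace_nonempty_of_angle_ne_pi h₂ h₃ h₂₃ c₂ c₃
    · exact .inr <| .inl <| halfspace_inter_halfspace_nonempty_of_angle_ne_pi h₁ h₃ h₁₃ c₁ c₃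
  · exact .inl <| halfspace_inter_halfspace_nonempty_of_angle_ne_pi h₁ h₂ h₁₂ c₁ c₂

/-- Three open halfspaces in `ℝⁿ` cannot be pairwise disjoint: at least one of the
pairwise intersections is nonempty. -/
theorem three_halfspaces_not_pairwise_disjoint
    (n : ℕ) (hn : 1 ≤ n) (u₁ u₂ u₃ : EuclideanSpace ℝ (Fin n))
    (h₁ : u₁ ≠ 0) (h₂ : u₂ ≠ 0) (h₃ : u₃ ≠ 0) (c₁ c₂ c₃ : ℝ) :
    ({y : EuclideanSpace ℝ (Fin n) | ⟪u₁, y⟫ > c₁} ∩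
      {y : EuclideanSpace ℝ (Fin n) | ⟪u₂, y⟫ > c₂}).Nonempty ∨
    ({y : EuclideanSpace ℝ (Fin n) | ⟪u₁, y⟫ > c₁} ∩
      {y : EuclideanSpace ℝ (Fin n) | ⟪u₃, y⟫ > c₃}).Nonempty ∨
    ({y : EuclideanSpace ℝ (Fin n) | ⟪u₂, y⟫ > c₂} ∩
      {y : EuclideanSpace ℝ (Fin n) | ⟪u₃, y⟫ > c₃}).Nonempty :=
  three_halfspaces_not_pairwise_disjoint_general n u₁ u₂ u₃ h₁ h₂ h₃ c₁ c₂ c₃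
end

section
/- Let n ≥ 1, let u, v be nonzero vectors in ℝⁿ and a, b real numbers, and suppose the open halfspaces {y ∈ ℝⁿ : ⟪u, y⟫ > a} and {y ∈ ℝⁿ : ⟪v, y⟫ > b} are disjoint. Then their bounding hyperplanes are parallel with opposite orientations: there exists a real number t < 0 such that v = t • u. -/
open RealInnerProductSpace

/-- If two open halfspaces in `ℝⁿ` are disjoint, their bounding hyperplanes are parallel
with opposite orientations: the normal of one is a negative scalar multiple of the other. -/
theorem disjoint_halfspaces_parallel_opposite
    (n : ℕ) (hn : 1 ≤ n) (u v : EuclideanSpace ℝ (Fin n))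
    (hu : u ≠ 0) (hv : v ≠ 0) (a b : ℝ)
    (hdisj : Disjoint {y : EuclideanSpace ℝ (Fin n) | ⟪u, y⟫ > a}
      {y : EuclideanSpace ℝ (Fin n) | ⟪v, y⟫ > b}) :
    ∃ t : ℝ, t < 0 ∧ v = t • u := by
  have key : ∀ y : EuclideanSpace ℝ (Fin n), ⟪u, y⟫ > a → ⟪v, y⟫ > b → False := by
    intro y h1 h2
    exact Set.disjoint_left.mp hdisj h1 h2
  have hu2 : (0:ℝ) < ‖u‖^2 := pow_pos (norm_pos_iff.mpr hu) 2
  have huu : ⟪u, u⟫ = ‖u‖^2 := real_inner_self_eq_norm_sq u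
  set t₀ : ℝ := ⟪u, v⟫ / ‖u‖^2 with ht₀
  by_cases hw : v - t₀ • u = 0
  · have hveq : v = t₀ • u := by rwa [sub_eq_zero] at hw
    refine ⟨t₀, ?_, hveq⟩
    by_contra hpos
    push_neg at hpos
    have ht0ne : t₀ ≠ 0 := by
      intro h
      rw [h, zero_smul] at hveq
      exact hv hveq
    have ht0 : 0 < t₀ := lt_of_le_of_ne hpos (Ne.symm ht0ne)
    set s : ℝ := (max a (b / t₀) + 1) / ‖u‖^2 with hs
    set y : EuclideanSpace ℝ (Fin n) := s • u with hy
    have h1 : ⟪u, y⟫ = max a (b / t₀) + 1 := by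
      rw [hy, real_inner_smul_right, huu, hs, div_mul_cancel₀ _ (ne_of_gt hu2)]
    have h2 : ⟪v, y⟫ = t₀ * ⟪u, y⟫ := by
      rw [hveq, real_inner_smul_left]
    apply key y
    · rw [h1]; exact lt_of_le_of_lt (le_max_left _ _) (lt_add_one _)
    · rw [h2, h1]
      calc b = t₀ * (b / t₀) := by field_simp
        _ < t₀ * (max a (b / t₀) + 1) := by
            apply mul_lt_mul_of_pos_left _ ht0
            exact lt_of_le_of_lt (le_max_right _ _) (lt_add_one _)
  · exfalso
    set w : EuclideanSpace ℝ (Fin n) := v - t₀ • u with hwdef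
    have hw2 : (0:ℝ) < ‖w‖^2 := pow_pos (norm_pos_iff.mpr hw) 2
    have huw : ⟪u, w⟫ = 0 := by
      rw [hwdef, inner_sub_right, real_inner_smul_right, huu, ht₀,
        div_mul_cancel₀ _ (ne_of_gt hu2), sub_self]
    have hvw : ⟪v, w⟫ = ‖w‖^2 := by
      have : v = w + t₀ • u := by rw [hwdef]; abel
      rw [this, inner_add_left, real_inner_smul_left, huw, real_inner_self_eq_norm_sq, mul_zero, add_zero]
    set s : ℝ := (a + 1) / ‖u‖^2 with hs
    set r : ℝ := (b - s * ⟪v, u⟫ + 1) / ‖w‖^2 with hr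
    set y : EuclideanSpace ℝ (Fin n) := s • u + r • w with hy
    apply key y
    · have : ⟪u, y⟫ = a + 1 := by
        rw [hy, inner_add_right, real_inner_smul_right, real_inner_smul_right, huu, huw,
          mul_zero, add_zero, hs, div_mul_cancel₀ _ (ne_of_gt hu2)]
      rw [this]; exact lt_add_one a
    · have : ⟪v, y⟫ = b + 1 := by
        rw [hy, inner_add_right, real_inner_smul_right, real_inner_smul_right, hvw,
          hr, div_mul_cancel₀ _ (ne_of_gt hw2)]
        ring
      rw [this]; exact lt_add_one b
end

section
/- Let n ≥ 1 and let S₁, S₂, S₃ be pairwise disjoint subsets of ℝⁿ such that each S_i contains a point x_i at which the coverage of S_i is infinite, i.e., for every r > 0 there exist q ∈ ℝⁿ and s > r with x_i ∈ B(q, s) ⊆ S_i. Then a contradiction follows; hence a classifier with infinite pointwise coverage can have at most two labels in its label set. -/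
/-!
Take anchors of the three points with radii `s₁, s₂, s₃` much larger than the mutual distances
of the points, and let `uᵢ = (qᵢ - xᵢ) / sᵢ` be the rescaled direction from `xᵢ` to the centre of
its anchor; these vectors lie in the unit ball. Two disjoint balls of huge radii passing close to
each other must point in almost opposite directions, so `⟪uᵢ, uⱼ⟫ < -1/2` for `i ≠ j`. But then
`‖u₁ + u₂ + u₃‖² < 3 - 3 = 0`.
-/

open Metric InnerProductSpace

variable {E : Type*} [NormedAddCommGroup E] [InnerProductSpace ℝ E]

theorem inner_sub_lt_of_disjoint_ball {q₁ q₂ y₁ y₂ : E} {s₁ s₂ : ℝ}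
    (hdisj : Disjoint (ball q₁ s₁) (ball q₂ s₂)) (hy₁ : y₁ ∈ ball q₁ s₁) (hy₂ : y₂ ∈ ball q₂ s₂)
    (hs₁ : 4 * dist y₁ y₂ < s₁) (hs₂ : 4 * dist y₁ y₂ < s₂) :
    ⟪q₁ - y₁, q₂ - y₂⟫_ℝ < -(s₁ * s₂) / 2 := by
  have hcentres : s₁ + s₂ ≤ dist q₁ q₂ :=
    (disjoint_ball_ball_iff (pos_of_mem_ball hy₁) (pos_of_mem_ball hy₂)).mp hdisj
  have ha₁ : ‖q₁ - y₁‖ < s₁ := by rwa [← dist_eq_norm, dist_comm]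
  have ha₂ : ‖q₂ - y₂‖ < s₂ := by rwa [← dist_eq_norm, dist_comm]
  have hgap : s₁ + s₂ - dist y₁ y₂ ≤ ‖(q₁ - y₁) - (q₂ - y₂)‖ := by
    have hsplit : q₁ - q₂ = ((q₁ - y₁) - (q₂ - y₂)) + (y₁ - y₂) := by abel
    have := norm_add_le ((q₁ - y₁) - (q₂ - y₂)) (y₁ - y₂)
    rw [← hsplit, ← dist_eq_norm, ← dist_eq_norm y₁] at this
    linarith
  have hd := dist_nonneg (x := y₁) (y := y₂)
  have hsq : (s₁ + s₂ - dist y₁ y₂) ^ 2 ≤ ‖(q₁ - y₁) - (q₂ - y₂)‖ ^ 2 :=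
    pow_le_pow_left₀ (by linarith) hgap 2
  rw [norm_sub_sq_real] at hsq
  -- `2⟪a₁, a₂⟫ < s₁² + s₂² - (s₁ + s₂ - d)² ≤ -s₁ s₂`, as `4d < sᵢ` gives `2d (s₁ + s₂) < s₁ s₂`
  nlinarith [norm_nonneg (q₁ - y₁), norm_nonneg (q₂ - y₂)]

theorem inner_inv_smul_sub_lt_neg_half {q₁ q₂ y₁ y₂ : E} {s₁ s₂ : ℝ}
    (hdisj : Disjoint (ball q₁ s₁) (ball q₂ s₂)) (hy₁ : y₁ ∈ ball q₁ s₁) (hy₂ : y₂ ∈ ball q₂ s₂)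
    (hs₁ : 4 * dist y₁ y₂ < s₁) (hs₂ : 4 * dist y₁ y₂ < s₂) :
    ⟪s₁⁻¹ • (q₁ - y₁), s₂⁻¹ • (q₂ - y₂)⟫_ℝ < -1 / 2 := by
  have hs₁pos := pos_of_mem_ball hy₁
  have hs₂pos := pos_of_mem_ball hy₂
  rw [real_inner_smul_left, real_inner_smul_right, ← mul_assoc, ← mul_inv,
    inv_mul_lt_iff₀ (by positivity)]
  linarith [inner_sub_lt_of_disjoint_ball hdisj hy₁ hy₂ hs₁ hs₂]

theorem norm_inv_smul_sub_lt_one {q y : E} {s : ℝ} (hy : y ∈ ball q s) :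
    ‖s⁻¹ • (q - y)‖ < 1 := by
  have hs := pos_of_mem_ball hy
  rw [norm_smul, norm_inv, Real.norm_eq_abs, abs_of_pos hs, inv_mul_lt_iff₀ hs, mul_one,
    ← dist_eq_norm, dist_comm]
  exact hy

theorem not_pairwise_inner_lt_neg_half {b₁ b₂ b₃ : E}
    (h₁ : ‖b₁‖ ≤ 1) (h₂ : ‖b₂‖ ≤ 1) (h₃ : ‖b₃‖ ≤ 1) :
    ¬(⟪b₁, b₂⟫_ℝ < -1 / 2 ∧ ⟪b₁, b₃⟫_ℝ < -1 / 2 ∧ ⟪b₂, b₃⟫_ℝ < -1 / 2) := by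
  rintro ⟨h₁₂, h₁₃, h₂₃⟩
  have hsum : ‖b₁ + b₂ + b₃‖ ^ 2 = ‖b₁‖ ^ 2 + ‖b₂‖ ^ 2 + ‖b₃‖ ^ 2
      + 2 * ⟪b₁, b₂⟫_ℝ + 2 * ⟪b₁, b₃⟫_ℝ + 2 * ⟪b₂, b₃⟫_ℝ := by
    rw [norm_add_sq_real, norm_add_sq_real, inner_add_left]
    ring
  nlinarith [sq_nonneg ‖b₁ + b₂ + b₃‖, norm_nonneg b₁, norm_nonneg b₂, norm_nonneg b₃]

theorem at_most_two_labels_of_infinite_coverage_general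
    (n : ℕ) (S₁ S₂ S₃ : Set (EuclideanSpace ℝ (Fin n)))
    (h₁₂ : Disjoint S₁ S₂) (h₁₃ : Disjoint S₁ S₃) (h₂₃ : Disjoint S₂ S₃)
    (x₁ x₂ x₃ : EuclideanSpace ℝ (Fin n))
    (hcov₁ : ∀ r : ℝ, 0 < r → ∃ (q : EuclideanSpace ℝ (Fin n)) (s : ℝ),
      r < s ∧ x₁ ∈ ball q s ∧ ball q s ⊆ S₁)
    (hcov₂ : ∀ r : ℝ, 0 < r → ∃ (q : EuclideanSpace ℝ (Fin n)) (s : ℝ),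
      r < s ∧ x₂ ∈ ball q s ∧ ball q s ⊆ S₂)
    (hcov₃ : ∀ r : ℝ, 0 < r → ∃ (q : EuclideanSpace ℝ (Fin n)) (s : ℝ),
      r < s ∧ x₃ ∈ ball q s ∧ ball q s ⊆ S₃) :
    False := by
  set R := 4 * (dist x₁ x₂ + dist x₁ x₃ + dist x₂ x₃) + 1
  have hR : 0 < R := by positivity
  have hfar : ∀ s, R < s → 4 * dist x₁ x₂ < s ∧ 4 * dist x₁ x₃ < s ∧ 4 * dist x₂ x₃ < s :=
    fun s hs ↦ by
      have := dist_nonneg (x := x₁) (y := x₂)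
      have := dist_nonneg (x := x₁) (y := x₃)
      have := dist_nonneg (x := x₂) (y := x₃)
      exact ⟨by linarith, by linarith, by linarith⟩
  obtain ⟨q₁, s₁, hR₁, hx₁, hsub₁⟩ := hcov₁ R hR
  obtain ⟨q₂, s₂, hR₂, hx₂, hsub₂⟩ := hcov₂ R hR
  obtain ⟨q₃, s₃, hR₃, hx₃, hsub₃⟩ := hcov₃ R hR
  exact not_pairwise_inner_lt_neg_half (norm_inv_smul_sub_lt_one hx₁).le
    (norm_inv_smul_sub_lt_one hx₂).le (norm_inv_smul_sub_lt_one hx₃).le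
    ⟨inner_inv_smul_sub_lt_neg_half (h₁₂.mono hsub₁ hsub₂) hx₁ hx₂ (hfar _ hR₁).1 (hfar _ hR₂).1,
      inner_inv_smul_sub_lt_neg_half (h₁₃.mono hsub₁ hsub₃) hx₁ hx₃
        (hfar _ hR₁).2.1 (hfar _ hR₃).2.1,
      inner_inv_smul_sub_lt_neg_half (h₂₃.mono hsub₂ hsub₃) hx₂ hx₃
        (hfar _ hR₂).2.2 (hfar _ hR₃).2.2⟩

/-- Three pairwise disjoint subsets of `ℝⁿ`, each containing a point at which its
coverage is infinite, yield a contradiction: a classifier with infinite pointwise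
coverage has at most two labels. -/
theorem at_most_two_labels_of_infinite_coverage
    (n : ℕ) (hn : 1 ≤ n) (S₁ S₂ S₃ : Set (EuclideanSpace ℝ (Fin n)))
    (h₁₂ : Disjoint S₁ S₂) (h₁₃ : Disjoint S₁ S₃) (h₂₃ : Disjoint S₂ S₃)
    (x₁ x₂ x₃ : EuclideanSpace ℝ (Fin n))
    (hx₁ : x₁ ∈ S₁) (hx₂ : x₂ ∈ S₂) (hx₃ : x₃ ∈ S₃)
    (hcov₁ : ∀ r : ℝ, 0 < r → ∃ (q : EuclideanSpace ℝ (Fin n)) (s : ℝ),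
      r < s ∧ x₁ ∈ ball q s ∧ ball q s ⊆ S₁)
    (hcov₂ : ∀ r : ℝ, 0 < r → ∃ (q : EuclideanSpace ℝ (Fin n)) (s : ℝ),
      r < s ∧ x₂ ∈ ball q s ∧ ball q s ⊆ S₂)
    (hcov₃ : ∀ r : ℝ, 0 < r → ∃ (q : EuclideanSpace ℝ (Fin n)) (s : ℝ),
      r < s ∧ x₃ ∈ ball q s ∧ ball q s ⊆ S₃) :
    False :=
  at_most_two_labels_of_infinite_coverage_general n S₁ S₂ S₃ h₁₂ h₁₃ h₂₃ x₁ x₂ x₃ hcov₁ hcov₂ hcov₃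
end

section
/- Let n ≥ 1 and let L be a collection of pairwise disjoint nonempty subsets of ℝⁿ containing at least two distinct members, such that the set R = ℝⁿ \ ⋃L is meagre and Lebesgue null, and such that for every x ∈ ⋃L the coverage at x of the member of L containing x is infinite (for every r > 0 there is an open ball of radius greater than r containing x and contained in that member). Then there exist a nonzero vector u ∈ ℝⁿ and a real number c such that L consists of exactly the two open halfspaces {y : ⟪u, y⟫ > c} and {y : ⟪u, y⟫ < c}, and R is the separating hyperplane {y : ⟪u, y⟫ = c}. (Every non-trivial classifier with infinite pointwise coverage is a refined linear classifier.) -/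
open Metric RealInnerProductSpace MeasureTheory
open Filter Topology

theorem halfspace_aux {n : ℕ} {A : Set (EuclideanSpace ℝ (Fin n))}
    {a b : EuclideanSpace ℝ (Fin n)} (hb : b ∉ A)
    (hcov : ∀ r : ℝ, 0 < r → ∃ q s, r < s ∧ a ∈ ball q s ∧ ball q s ⊆ A) :
    ∃ u : EuclideanSpace ℝ (Fin n), ‖u‖ = 1 ∧
      {y | 0 < ⟪u, y - a⟫} ⊆ A := by
  have key : ∀ k : ℕ, ∃ q s, (k : ℝ) + ‖a - b‖ + 1 < s ∧ a ∈ ball q s ∧ ball q s ⊆ A :=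
    fun k => hcov _ (by have := norm_nonneg (a-b); have h0 : (0:ℝ) ≤ (k:ℝ) := Nat.cast_nonneg k; linarith)
  choose q s hs hmem hsub using key
  have hd : ∀ k : ℕ, (k : ℝ) + 1 ≤ ‖q k - a‖ := by
    intro k
    have h1 : s k ≤ dist b (q k) := by
      by_contra h
      exact hb (hsub k (mem_ball.2 (by linarith)))
    have h2 : dist b (q k) ≤ dist b a + dist a (q k) := dist_triangle _ _ _
    have h3 : dist a (q k) = ‖q k - a‖ := by rw [dist_eq_norm, norm_sub_rev]
    have h4 : dist b a = ‖a - b‖ := by rw [dist_eq_norm, norm_sub_rev]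
    linarith [hs k]
  have hd0 : ∀ k : ℕ, (0:ℝ) < ‖q k - a‖ := by
    intro k; have := hd k; have h0 : (0:ℝ) ≤ (k:ℝ) := Nat.cast_nonneg k; linarith
  set U : ℕ → EuclideanSpace ℝ (Fin n) := fun k => ‖q k - a‖⁻¹ • (q k - a) with hU
  have hUs : ∀ k, U k ∈ sphere (0 : EuclideanSpace ℝ (Fin n)) 1 := by
    intro k
    rw [mem_sphere_zero_iff_norm]
    refine norm_smul_inv_norm ?_
    intro h
    have := hd0 k
    rw [h, norm_zero] at this
    exact lt_irrefl _ this
  obtain ⟨u, hu, φ, hφ, hconv⟩ :=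
    (isCompact_sphere (0 : EuclideanSpace ℝ (Fin n)) 1).tendsto_subseq hUs
  rw [mem_sphere_zero_iff_norm] at hu
  refine ⟨u, hu, fun y hy => ?_⟩
  set v := y - a with hv
  have hε : (0:ℝ) < ⟪u, v⟫ := hy
  have hcont : Tendsto (fun k => ⟪U (φ k), v⟫) atTop (𝓝 ⟪u, v⟫) :=
    hconv.inner tendsto_const_nhds
  have hev : ∀ᶠ k in atTop, ⟪u, v⟫ / 2 < ⟪U (φ k), v⟫ :=
    hcont.eventually (eventually_gt_nhds (half_lt_self hε))
  obtain ⟨K, hK⟩ := eventually_atTop.1 hev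
  obtain ⟨N0, hN0⟩ := exists_nat_ge (‖v‖ ^ 2 / (⟪u, v⟫))
  set N := max K N0 with hN
  have hKN : ⟪u, v⟫ / 2 < ⟪U (φ N), v⟫ := hK N (le_max_left _ _)
  set k := φ N with hk
  have hφN : (N : ℝ) ≤ (k : ℝ) := by exact_mod_cast hφ.le_apply
  set d := ‖q k - a‖ with hdd
  have hd1 : ‖v‖ ^ 2 / ⟪u, v⟫ < d := by
    have h1 : (N0 : ℝ) ≤ N := by exact_mod_cast le_max_right K N0
    have := hd k
    linarith
  have hdpos : (0:ℝ) < d := hd0 k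
  have hinner : d * (⟪u, v⟫ / 2) < ⟪q k - a, v⟫ := by
    have : ⟪U k, v⟫ = d⁻¹ * ⟪q k - a, v⟫ := real_inner_smul_left _ _ _
    rw [this] at hKN
    calc d * (⟪u, v⟫ / 2) < d * (d⁻¹ * ⟪q k - a, v⟫) := by
          exact (mul_lt_mul_iff_right₀ hdpos).2 hKN
      _ = ⟪q k - a, v⟫ := by field_simp
  -- now show y ∈ ball (q k) (s k)
  refine hsub k ?_
  rw [mem_ball, dist_eq_norm]
  have hyq : y - q k = v - (q k - a) := by rw [hv]; abel
  have hnorm : ‖v - (q k - a)‖ ^ 2 = ‖v‖ ^ 2 - 2 * ⟪v, q k - a⟫ + d ^ 2 :=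
    norm_sub_sq_real v (q k - a)
  have hvw : ⟪v, q k - a⟫ = ⟪q k - a, v⟫ := real_inner_comm _ _
  have hds : d < s k := by
    have : dist a (q k) < s k := mem_ball.1 (hmem k)
    rw [dist_eq_norm, norm_sub_rev] at this
    exact this
  have hlt : ‖y - q k‖ ^ 2 < s k ^ 2 := by
    rw [hyq, hnorm, hvw]
    have h2 : ‖v‖ ^ 2 < d * ⟪u, v⟫ := by
      have := (div_lt_iff₀ hε).1 hd1
      linarith
    nlinarith
  have := lt_of_pow_lt_pow_left₀ 2 (by linarith : (0:ℝ) ≤ s k) hlt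
  exact this

theorem opp_aux {n : ℕ} {u v : EuclideanSpace ℝ (Fin n)} {c d : ℝ}
    (hu : ‖u‖ = 1) (hv : ‖v‖ = 1)
    (h : ∀ y : EuclideanSpace ℝ (Fin n), c < ⟪u, y⟫ → d < ⟪v, y⟫ → False) :
    v = -u := by
  by_contra hne
  have hsum : u + v ≠ 0 := by
    intro h0
    exact hne (by rw [eq_neg_iff_add_eq_zero, add_comm]; exact h0)
  have hpos : (0:ℝ) < ‖u + v‖ ^ 2 := by
    have := norm_pos_iff.2 hsum
    positivity
  have hid : ‖u + v‖ ^ 2 = 2 * (1 + ⟪u, v⟫) := by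
    have := norm_add_sq_real u v
    rw [hu, hv] at this
    linarith
  set t := (max c d + 1) * (2 / ‖u + v‖ ^ 2) with ht
  have huu : ⟪u, u⟫ = 1 := by
    rw [real_inner_self_eq_norm_mul_norm, hu]; norm_num
  have hvv : ⟪v, v⟫ = 1 := by
    rw [real_inner_self_eq_norm_mul_norm, hv]; norm_num
  have e1 : (1:ℝ) + ⟪u, v⟫ = ‖u + v‖ ^ 2 / 2 := by linarith
  have e2 : ⟪v, u⟫ = ⟪u, v⟫ := real_inner_comm u v
  have hval : ⟪u, t • (u + v)⟫ = max c d + 1 ∧ ⟪v, t • (u + v)⟫ = max c d + 1 := by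
    constructor
    · rw [real_inner_smul_right, inner_add_right, huu, e1, ht]
      field_simp
    · rw [real_inner_smul_right, inner_add_right, hvv, e2, add_comm, e1, ht]
      field_simp
  exact h (t • (u + v))
    (by rw [hval.1]; exact lt_of_le_of_lt (le_max_left c d) (by linarith))
    (by rw [hval.2]; exact lt_of_le_of_lt (le_max_right c d) (by linarith))


/-- Every non-trivial classifier with infinite pointwise coverage is a refined linear
classifier: if `L` is a collection of pairwise disjoint nonempty subsets of `ℝⁿ` with at
least two members, whose complement `R = ℝⁿ \ ⋃L` is meagre and Lebesgue null, and every
point of every label has anchors of arbitrarily large radius, then `L` consists of the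
two open halfspaces determined by some hyperplane and `R` is that hyperplane. -/
theorem infinite_pointwise_coverage_is_refined_linear
    (n : ℕ) (hn : 1 ≤ n) (L : Set (Set (EuclideanSpace ℝ (Fin n))))
    (hdisj : L.Pairwise Disjoint)
    (hne : ∀ A ∈ L, A.Nonempty)
    (htwo : ∃ A ∈ L, ∃ B ∈ L, A ≠ B)
    (hmeagre : IsMeagre (Set.univ \ ⋃₀ L))
    (hnull : volume (Set.univ \ ⋃₀ L) = 0)
    (hcov : ∀ A ∈ L, ∀ x ∈ A, ∀ r : ℝ, 0 < r →
      ∃ (q : EuclideanSpace ℝ (Fin n)) (s : ℝ), r < s ∧ x ∈ ball q s ∧ ball q s ⊆ A) :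
    ∃ (u : EuclideanSpace ℝ (Fin n)) (c : ℝ), u ≠ 0 ∧
      L = {{y : EuclideanSpace ℝ (Fin n) | ⟪u, y⟫ > c},
           {y : EuclideanSpace ℝ (Fin n) | ⟪u, y⟫ < c}} ∧
      Set.univ \ ⋃₀ L = {y : EuclideanSpace ℝ (Fin n) | ⟪u, y⟫ = c} := by
  classical
  obtain ⟨A, hA, B, hB, hAB⟩ := htwo
  have hdAB : Disjoint A B := hdisj hA hB hAB
  obtain ⟨a0, ha0⟩ := hne A hA
  obtain ⟨b0, hb0⟩ := hne B hB
  have ha0B : a0 ∉ B := fun h => Set.disjoint_left.1 hdAB ha0 h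
  have hb0A : b0 ∉ A := fun h => Set.disjoint_right.1 hdAB hb0 h
  -- convert halfspace form
  have conv : ∀ (w x : EuclideanSpace ℝ (Fin n)) (C : Set (EuclideanSpace ℝ (Fin n))),
      ({y | 0 < ⟪w, y - x⟫} ⊆ C) → {y | ⟪w, x⟫ < ⟪w, y⟫} ⊆ C := by
    intro w x C h y hy
    apply h
    simp only [Set.mem_setOf_eq, inner_sub_right]
    have : ⟪w, x⟫ < ⟪w, y⟫ := hy
    linarith
  -- key: two halfspaces inside distinct labels have opposite directions
  have key : ∀ (w : EuclideanSpace ℝ (Fin n)) (e : ℝ) (C : Set (EuclideanSpace ℝ (Fin n))),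
      ‖w‖ = 1 → C ∈ L → ({y | e < ⟪w, y⟫} ⊆ C) →
      ∀ (w' : EuclideanSpace ℝ (Fin n)) (e' : ℝ) (C' : Set (EuclideanSpace ℝ (Fin n))),
      ‖w'‖ = 1 → C' ∈ L → ({y | e' < ⟪w', y⟫} ⊆ C') → C ≠ C' → w' = -w := by
    intro w e C hw hC hsub w' e' C' hw' hC' hsub' hne'
    apply opp_aux hw hw'
    intro y h1 h2
    exact Set.disjoint_left.1 (hdisj hC hC' hne') (hsub h1) (hsub' h2)
  obtain ⟨u, hu, hHA0⟩ := halfspace_aux hb0A (hcov A hA a0 ha0)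
  obtain ⟨v0, hv0, hHB0⟩ := halfspace_aux ha0B (hcov B hB b0 hb0)
  have HA0 := conv u a0 A hHA0
  have HB0' := conv v0 b0 B hHB0
  have hv0u : v0 = -u := key u _ A hu hA HA0 v0 _ B hv0 hB HB0' hAB
  have huu : ⟪u, u⟫ = 1 := by
    rw [real_inner_self_eq_norm_mul_norm, hu]; norm_num
  have hnu : ‖-u‖ = 1 := by rw [norm_neg]; exact hu
  subst hv0u
  -- per-point halfspaces in A
  have HA' : ∀ a' ∈ A, {y | ⟪u, a'⟫ < ⟪u, y⟫} ⊆ A := by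
    intro a' ha'
    obtain ⟨w, hw, hsubw⟩ := halfspace_aux hb0A (hcov A hA a' ha')
    have hsubw' := conv w a' A hsubw
    have hwu : w = -(-u) := key (-u) _ B hnu hB HB0' w _ A hw hA hsubw' (Ne.symm hAB)
    rw [neg_neg] at hwu
    rwa [hwu] at hsubw'
  have HB' : ∀ b' ∈ B, {y | ⟪u, y⟫ < ⟪u, b'⟫} ⊆ B := by
    intro b' hb'
    obtain ⟨w, hw, hsubw⟩ := halfspace_aux ha0B (hcov B hB b' hb')
    have hsubw' := conv w b' B hsubw
    have hwu : w = -u := key u _ A hu hA HA0 w _ B hw hB hsubw' hAB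
    rw [hwu] at hsubw'
    intro y hy
    apply hsubw'
    simp only [Set.mem_setOf_eq, inner_neg_left]
    have : ⟪u, y⟫ < ⟪u, b'⟫ := hy
    linarith
  -- ordering
  have horder : ∀ a' ∈ A, ∀ b' ∈ B, ⟪u, b'⟫ ≤ ⟪u, a'⟫ := by
    intro a' ha' b' hb'
    by_contra hlt
    push_neg at hlt
    set m := (⟪u, a'⟫ + ⟪u, b'⟫) / 2 with hm
    have hym : ⟪u, m • u⟫ = m := by rw [real_inner_smul_right, huu, mul_one]
    have hyA : m • u ∈ A := HA' a' ha' (by simp only [Set.mem_setOf_eq, hym]; linarith)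
    have hyB : m • u ∈ B := HB' b' hb' (by simp only [Set.mem_setOf_eq, hym]; linarith)
    exact Set.disjoint_left.1 hdAB hyA hyB
  set f : EuclideanSpace ℝ (Fin n) → ℝ := fun y => ⟪u, y⟫ with hf
  have hbddA : BddBelow (f '' A) := ⟨⟪u, b0⟫, by
    rintro t ⟨a', ha', rfl⟩; exact horder a' ha' b0 hb0⟩
  have hbddB : BddAbove (f '' B) := ⟨⟪u, a0⟫, by
    rintro t ⟨b', hb', rfl⟩; exact horder a0 ha0 b' hb'⟩
  have hneA : (f '' A).Nonempty := ⟨f a0, Set.mem_image_of_mem f ha0⟩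
  have hneB : (f '' B).Nonempty := ⟨f b0, Set.mem_image_of_mem f hb0⟩
  set cA := sInf (f '' A) with hcA
  set cB := sSup (f '' B) with hcB
  have HAc : {y | cA < ⟪u, y⟫} ⊆ A := by
    intro y hy
    obtain ⟨t, ⟨a', ha', rfl⟩, hlt⟩ := exists_lt_of_csInf_lt hneA hy
    exact HA' a' ha' hlt
  have HBc : {y | ⟪u, y⟫ < cB} ⊆ B := by
    intro y hy
    obtain ⟨t, ⟨b', hb', rfl⟩, hlt⟩ := exists_lt_of_lt_csSup hneB hy
    exact HB' b' hb' hlt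
  have hAin : ∀ a' ∈ A, cA ≤ ⟪u, a'⟫ := fun a' ha' => csInf_le hbddA ⟨a', ha', rfl⟩
  have hBin : ∀ b' ∈ B, ⟪u, b'⟫ ≤ cB := fun b' hb' => le_csSup hbddB ⟨b', hb', rfl⟩
  -- no third label
  have HBc' : {y | -cB < ⟪-u, y⟫} ⊆ B := by
    intro y hy
    apply HBc
    simp only [Set.mem_setOf_eq, inner_neg_left] at hy ⊢
    linarith
  have hthird : ∀ C ∈ L, C ≠ A → C ≠ B → ∀ x, x ∈ C → False := by
    intro C hC hCA hCB x hx
    have haC : a0 ∉ C := fun h => Set.disjoint_left.1 (hdisj hC hA hCA) h ha0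
    obtain ⟨w, hw, hsubw⟩ := halfspace_aux haC (hcov C hC x hx)
    have hsubw' := conv w x C hsubw
    have h1 : w = -u := key u _ A hu hA HAc w _ C hw hC hsubw' (Ne.symm hCA)
    have h2 : w = -(-u) := key (-u) _ B hnu hB HBc' w _ C hw hC hsubw' (Ne.symm hCB)
    rw [neg_neg] at h2
    have hu0 : u + u = 0 := neg_eq_iff_add_eq_zero.1 (h1.symm.trans h2)
    have : (2 : ℝ) • u = 0 := by rw [two_smul]; exact hu0
    have : u = 0 := by
      rcases smul_eq_zero.1 this with h | h
      · norm_num at h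
      · exact h
    rw [this, norm_zero] at hu
    norm_num at hu
  -- cA = cB via slab + null complement
  have hcBA : cB ≤ cA := by
    apply csSup_le hneB
    rintro t ⟨b', hb', rfl⟩
    apply le_csInf hneA
    rintro t' ⟨a', ha', rfl⟩
    exact horder a' ha' b' hb'
  have hcAB : cA ≤ cB := by
    by_contra hlt
    push_neg at hlt
    set S : Set (EuclideanSpace ℝ (Fin n)) := f ⁻¹' Set.Ioo cB cA with hS
    have hfc : Continuous f := continuous_const.inner continuous_id
    have hSopen : IsOpen S := isOpen_Ioo.preimage hfc
    have hSne : S.Nonempty := by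
      refine ⟨((cB + cA) / 2) • u, ?_⟩
      simp only [hS, Set.mem_preimage, Set.mem_Ioo, hf, real_inner_smul_right, huu, mul_one]
      constructor <;> linarith
    have hpos : 0 < volume S := hSopen.measure_pos volume hSne
    have hnsub : ¬ S ⊆ Set.univ \ ⋃₀ L := by
      intro hsub
      have := (measure_mono hsub).trans_eq hnull
      exact absurd this (by simpa using hpos.ne')
    obtain ⟨x, hxS, hxR⟩ := Set.not_subset.1 hnsub
    have hxL : x ∈ ⋃₀ L := by
      by_contra hxL
      exact hxR ⟨Set.mem_univ x, hxL⟩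
    obtain ⟨C, hC, hxC⟩ := hxL
    have hxIoo : f x ∈ Set.Ioo cB cA := hxS
    have hxA : x ∉ A := fun h => absurd (hAin x h) (not_le.2 hxIoo.2)
    have hxB : x ∉ B := fun h => absurd (hBin x h) (not_le.2 hxIoo.1)
    exact hthird C hC (fun h => hxA (h ▸ hxC)) (fun h => hxB (h ▸ hxC)) x hxC
  have hceq : cA = cB := le_antisymm hcAB hcBA
  -- A and B are exactly the halfspaces
  have hAeq : A = {y | ⟪u, y⟫ > cA} := by
    apply Set.Subset.antisymm
    · intro a' ha'
      rcases lt_or_eq_of_le (hAin a' ha') with h | h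
      · exact h
      · exfalso
        obtain ⟨q, s, hs, hmem, hsub⟩ := hcov A hA a' ha' 1 one_pos
        set ε := s - dist a' q with hε
        have hεpos : 0 < ε := by
          have := mem_ball.1 hmem
          simp only [hε]; linarith
        set p := a' - (ε / 2) • u with hp
        have hdist : dist p a' = ε / 2 := by
          rw [dist_eq_norm, hp]
          simp only [sub_sub_cancel_left, norm_neg, norm_smul, Real.norm_eq_abs, hu, mul_one]
          rw [abs_of_pos (by linarith)]
        have hpA : p ∈ A := by
          apply hsub
          rw [mem_ball]
          calc dist p q ≤ dist p a' + dist a' q := dist_triangle _ _ _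
            _ = ε / 2 + dist a' q := by rw [hdist]
            _ < s := by simp only [hε] at *; linarith
        have hip : ⟪u, p⟫ = ⟪u, a'⟫ - ε / 2 := by
          rw [hp, inner_sub_right, real_inner_smul_right, huu, mul_one]
        have := hAin p hpA
        rw [hip, ← h] at this
        linarith
    · exact HAc
  have hBeq : B = {y | ⟪u, y⟫ < cA} := by
    rw [hceq]
    apply Set.Subset.antisymm
    · intro b' hb'
      rcases lt_or_eq_of_le (hBin b' hb') with h | h
      · exact h
      · exfalso
        obtain ⟨q, s, hs, hmem, hsub⟩ := hcov B hB b' hb' 1 one_pos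
        set ε := s - dist b' q with hε
        have hεpos : 0 < ε := by
          have := mem_ball.1 hmem
          simp only [hε]; linarith
        set p := b' + (ε / 2) • u with hp
        have hdist : dist p b' = ε / 2 := by
          rw [dist_eq_norm, hp]
          simp only [add_sub_cancel_left, norm_smul, Real.norm_eq_abs, hu, mul_one]
          rw [abs_of_pos (by linarith)]
        have hpB : p ∈ B := by
          apply hsub
          rw [mem_ball]
          calc dist p q ≤ dist p b' + dist b' q := dist_triangle _ _ _
            _ = ε / 2 + dist b' q := by rw [hdist]
            _ < s := by simp only [hε] at *; linarith
        have hip : ⟪u, p⟫ = ⟪u, b'⟫ + ε / 2 := by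
          rw [hp, inner_add_right, real_inner_smul_right, huu, mul_one]
        have := hBin p hpB
        rw [hip, h] at this
        linarith
    · exact HBc
  -- L = {A, B}
  have hL : L = {A, B} := by
    ext C
    constructor
    · intro hC
      by_contra hnC
      simp only [Set.mem_insert_iff, Set.mem_singleton_iff, not_or] at hnC
      obtain ⟨x, hx⟩ := hne C hC
      exact hthird C hC hnC.1 hnC.2 x hx
    · intro hC
      rcases hC with rfl | rfl
      · exact hA
      · exact hB
  refine ⟨u, cA, ?_, ?_, ?_⟩
  · intro h
    rw [h, norm_zero] at hu
    norm_num at hu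
  · rw [hL, hAeq, hBeq]
  · rw [hL, Set.sUnion_pair, hAeq, hBeq]
    ext y
    simp only [Set.mem_diff, Set.mem_univ, true_and, Set.mem_union, Set.mem_setOf_eq, not_or,
      not_lt]
    constructor
    · rintro ⟨h1, h2⟩
      linarith
    · intro h
      constructor <;> linarith
end

section
/- Let n ≥ 1 and let L be a collection of pairwise disjoint nonempty subsets of ℝⁿ containing at least two distinct members, such that R = ℝⁿ \ ⋃L is meagre and Lebesgue null. Then the following are equivalent: (1) for every x ∈ ⋃L, the coverage at x of the member of L containing x is infinite (for every r > 0 there is an open ball of radius greater than r containing x and contained in that member); (2) there exist a nonzero vector u ∈ ℝⁿ and a real c such that L = { {y : ⟪u, y⟫ > c}, {y : ⟪u, y⟫ < c} } and R = {y : ⟪u, y⟫ = c}. (A non-trivial classifier has infinite pointwise coverage just in case it is a refined linear classifier.) -/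
/-!
If a set contains balls of unbounded radius through a point `a` but misses some point, the
centres of those balls recede from `a`; their directions from `a` accumulate at a unit vector `e`
(compactness of the sphere), and the balls then exhaust the open halfspace
`{y | ⟪e, a⟫ < ⟪e, y⟫}`. Disjoint open halfspaces have opposite normals, so every label contains
the halfspace beyond each of its points for one common normal up to sign; this leaves room for
only two labels, each an open halfspace. The refinement set is null, hence has empty interior,
so the two halfspaces share their boundary hyperplane. Conversely, an open halfspace contains
arbitrarily large balls through each of its points.
-/

open Metric RealInnerProductSpace MeasureTheory

open Filter Topology Set

def HasInfiniteCoverage {X : Type*} [PseudoMetricSpace X] (A : Set X) (x : X) : Prop :=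
  ∀ r : ℝ, 0 < r → ∃ (q : X) (s : ℝ), r < s ∧ x ∈ ball q s ∧ ball q s ⊆ A

namespace HasInfiniteCoverage

variable {X : Type*} [PseudoMetricSpace X] {A : Set X} {x : X}

theorem mem_nhds (h : HasInfiniteCoverage A x) : A ∈ 𝓝 x := by
  obtain ⟨q, s, -, hx, hsub⟩ := h 1 one_pos
  exact mem_of_superset (isOpen_ball.mem_nhds hx) hsub

/-- Since `b ∉ A`, a large ball in `A` containing `x` has its centre far from `x`; shrinking it
puts `x` on its boundary. -/
theorem exists_ball_dist_subset (h : HasInfiniteCoverage A x) {b : X} (hb : b ∉ A) (R : ℝ) :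
    ∃ q, R < dist x q ∧ ball q (dist x q) ⊆ A := by
  obtain ⟨q, s, hs, hx, hsub⟩ := h (|R| + dist x b + 1) (by positivity)
  have hbs : s ≤ dist b q := not_lt.mp fun hbq => hb (hsub hbq)
  refine ⟨q, ?_, (ball_subset_ball (mem_ball.mp hx).le).trans hsub⟩
  linarith [dist_triangle b x q, dist_comm x b, le_abs_self R]

end HasInfiniteCoverage

theorem isOpen_of_forall_hasInfiniteCoverage {X : Type*} [PseudoMetricSpace X] {A : Set X}
    (h : ∀ x ∈ A, HasInfiniteCoverage A x) : IsOpen A :=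
  isOpen_iff_mem_nhds.mpr fun x hx => (h x hx).mem_nhds

section InnerProductSpace

variable {E : Type*} [NormedAddCommGroup E] [InnerProductSpace ℝ E]

theorem mem_ball_dist_of_norm_sq_lt_inner {a q y : E} (h : ‖y - a‖ ^ 2 < 2 * ⟪q - a, y - a⟫) :
    y ∈ ball q (dist a q) := by
  rw [mem_ball, dist_eq_norm, dist_eq_norm, norm_sub_rev a q]
  refine lt_of_pow_lt_pow_left₀ 2 (norm_nonneg _) ?_
  rw [show y - q = (y - a) - (q - a) by abel, norm_sub_sq_real, real_inner_comm]
  linarith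

theorem exists_halfspace_subset_of_hasInfiniteCoverage [FiniteDimensional ℝ E] {A : Set E}
    {a b : E} (ha : HasInfiniteCoverage A a) (hb : b ∉ A) :
    ∃ e : E, ‖e‖ = 1 ∧ {y | ⟪e, a⟫ < ⟪e, y⟫} ⊆ A := by
  choose q hq hball using fun k : ℕ => ha.exists_ball_dist_subset hb k
  have hpos k : 0 < dist a (q k) := (Nat.cast_nonneg k).trans_lt (hq k)
  set dir : ℕ → E := fun k => (dist a (q k))⁻¹ • (q k - a)
  have hdir k : dir k ∈ sphere (0 : E) 1 := by
    rw [mem_sphere_zero_iff_norm, norm_smul, norm_inv, norm_sub_rev, ← dist_eq_norm,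
      Real.norm_of_nonneg dist_nonneg, inv_mul_cancel₀ (hpos k).ne']
  obtain ⟨e, he, φ, hφ, hlim⟩ := (isCompact_sphere (0 : E) 1).tendsto_subseq hdir
  refine ⟨e, by simpa using he, fun y hy => ?_⟩
  have hey : 0 < ⟪e, y - a⟫ := by rw [inner_sub_right]; exact sub_pos.mpr hy
  have hdist : Tendsto (fun j => dist a (q (φ j))) atTop atTop :=
    (tendsto_atTop_mono (fun k => (hq k).le) tendsto_natCast_atTop_atTop).comp hφ.tendsto_atTop
  -- `⟪q - a, y - a⟫ = dist a q * ⟪dir, y - a⟫` tends to infinity along the subsequence.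
  obtain ⟨j, hj⟩ := ((hdist.atTop_mul_pos hey (hlim.inner tendsto_const_nhds)).eventually_gt_atTop
    (‖y - a‖ ^ 2 / 2)).exists
  refine hball (φ j) (mem_ball_dist_of_norm_sq_lt_inner ?_)
  have hinner : dist a (q (φ j)) * ⟪(dir ∘ φ) j, y - a⟫ = ⟪q (φ j) - a, y - a⟫ := by
    simp only [dir, Function.comp_apply, real_inner_smul_left, mul_inv_cancel_left₀ (hpos _).ne']
  linarith

theorem eq_neg_of_disjoint_halfspaces {e f : E} (he : ‖e‖ = 1) (hf : ‖f‖ = 1) {α β : ℝ}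
    (h : Disjoint {y | α < ⟪e, y⟫} {y | β < ⟪f, y⟫}) : f = -e := by
  by_contra hfe
  have hsum : e + f ≠ 0 := fun h0 => hfe (eq_neg_of_add_eq_zero_right h0)
  -- Both normals make the same positive angle with `e + f`, so far out along `e + f` both hold.
  have hinner_e : ⟪e, e + f⟫ = ‖e + f‖ ^ 2 / 2 := by
    rw [norm_add_sq_real, inner_add_right, real_inner_self_eq_norm_sq, he, hf]; ring
  have hinner_f : ⟪f, e + f⟫ = ‖e + f‖ ^ 2 / 2 := by
    rw [norm_add_sq_real, inner_add_right, real_inner_self_eq_norm_sq, he, hf, real_inner_comm]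
    ring
  have hlim : Tendsto (fun t : ℝ => t * (‖e + f‖ ^ 2 / 2)) atTop atTop :=
    tendsto_id.atTop_mul_const (by positivity)
  obtain ⟨t, hα, hβ⟩ := ((hlim.eventually_gt_atTop α).and (hlim.eventually_gt_atTop β)).exists
  refine h.ne_of_mem (a := t • (e + f)) ?_ ?_ rfl
  · simpa only [mem_ofPred_eq, real_inner_smul_right, hinner_e] using hα
  · simpa only [mem_ofPred_eq, real_inner_smul_right, hinner_f] using hβ

theorem halfspace_subset_of_disjoint_of_halfspace_subset [FiniteDimensional ℝ E] {C D : Set E}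
    (hCD : Disjoint C D) {c d f : E} (hc : HasInfiniteCoverage C c) (hd : d ∈ D)
    (hf : ‖f‖ = 1) (hD : {y | ⟪f, d⟫ < ⟪f, y⟫} ⊆ D) :
    {y | ⟪-f, c⟫ < ⟪-f, y⟫} ⊆ C := by
  obtain ⟨g, hg, hC⟩ :=
    exists_halfspace_subset_of_hasInfiniteCoverage hc (hCD.notMem_of_mem_right hd)
  rwa [← eq_neg_of_disjoint_halfspaces hf hg (hCD.mono hC hD).symm]

theorem exists_eq_halfspace {A : Set E} {e : E} (he : ‖e‖ = 1) (hA : IsOpen A) (hne : A.Nonempty)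
    {b : E} (hb : b ∉ A) (hup : ∀ a ∈ A, {y | ⟪e, a⟫ < ⟪e, y⟫} ⊆ A) :
    ∃ c, A = {y | c < ⟪e, y⟫} := by
  have hbdd : BddBelow ((⟪e, ·⟫) '' A) := by
    refine ⟨⟪e, b⟫, ?_⟩
    rintro _ ⟨a, ha, rfl⟩
    exact not_lt.mp fun hlt => hb (hup a ha hlt)
  refine ⟨sInf ((⟪e, ·⟫) '' A), Subset.antisymm (fun a ha => ?_) fun y hy => ?_⟩
  · obtain ⟨ε, hε, hball⟩ := Metric.isOpen_iff.mp hA a ha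
    have hmem : a - (ε / 2) • e ∈ A := hball <| by
      rw [mem_ball, dist_eq_norm, sub_sub_cancel_left, norm_neg, norm_smul, he,
        Real.norm_of_nonneg (by positivity)]
      linarith
    calc sInf ((⟪e, ·⟫) '' A) ≤ ⟪e, a - (ε / 2) • e⟫ := csInf_le hbdd ⟨_, hmem, rfl⟩
      _ = ⟪e, a⟫ - ε / 2 := by
        rw [inner_sub_right, real_inner_smul_right, real_inner_self_eq_norm_sq, he]; ring
      _ < ⟪e, a⟫ := by linarith
  · have hy' : sInf ((⟪e, ·⟫) '' A) < ⟪e, y⟫ := hy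
    obtain ⟨_, ⟨a, ha, rfl⟩, hlt⟩ := exists_lt_of_csInf_lt (hne.image _) hy'
    exact hup a ha hlt

theorem eq_of_disjoint_halfspaces_of_interior_compl_eq_empty {e : E} (he : ‖e‖ = 1) {c d : ℝ}
    (hdisj : Disjoint {y | c < ⟪e, y⟫} {y | ⟪e, y⟫ < d})
    (hint : interior ({y | c < ⟪e, y⟫} ∪ {y | ⟪e, y⟫ < d})ᶜ = ∅) : c = d := by
  have hmid : ⟪e, ((c + d) / 2) • e⟫ = (c + d) / 2 := by
    rw [real_inner_smul_right, real_inner_self_eq_norm_sq, he]; ring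
  rcases lt_trichotomy c d with hcd | hcd | hcd
  · refine absurd rfl (hdisj.ne_of_mem (a := ((c + d) / 2) • e) ?_ ?_) <;>
      simp only [mem_ofPred_eq, hmid] <;> linarith
  · exact hcd
  · have hcont : Continuous fun y : E => ⟪e, y⟫ := continuous_const.inner continuous_id
    have hslab :
        {y | d < ⟪e, y⟫ ∧ ⟪e, y⟫ < c} ⊆ interior ({y | c < ⟪e, y⟫} ∪ {y | ⟪e, y⟫ < d})ᶜ := by
      refine interior_maximal (fun y hy => ?_) ((isOpen_lt continuous_const hcont).inter
        (isOpen_lt hcont continuous_const))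
      simp only [mem_compl_iff, mem_union, mem_ofPred_eq, not_or, not_lt]
      exact ⟨hy.2.le, hy.1.le⟩
    have hmid_mem : ((c + d) / 2) • e ∈ {y | d < ⟪e, y⟫ ∧ ⟪e, y⟫ < c} := by
      simp only [mem_ofPred_eq, hmid]; constructor <;> linarith
    rw [hint] at hslab
    exact (hslab hmid_mem).elim

theorem ball_subset_halfspace {u q : E} {c s : ℝ} (h : c + s * ‖u‖ < ⟪u, q⟫) :
    ball q s ⊆ {y | c < ⟪u, y⟫} := fun y hy => by
  have hbound : ⟪u, q - y⟫ ≤ ‖u‖ * ‖q - y‖ := real_inner_le_norm _ _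
  have hdist : ‖u‖ * ‖q - y‖ ≤ s * ‖u‖ := by
    rw [mul_comm, ← dist_eq_norm, dist_comm]
    exact mul_le_mul_of_nonneg_right (mem_ball.mp hy).le (norm_nonneg u)
  rw [inner_sub_right] at hbound
  show c < ⟪u, y⟫
  linarith

theorem hasInfiniteCoverage_halfspace {u : E} (hu : u ≠ 0) {c : ℝ} {x : E} (hx : c < ⟪u, x⟫) :
    HasInfiniteCoverage {y | c < ⟪u, y⟫} x := by
  intro r hr
  have hnu : 0 < ‖u‖ := norm_pos_iff.mpr hu
  set δ := ⟪u, x⟫ - c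
  have hgap : 0 < δ / (2 * ‖u‖) := div_pos (sub_pos.mpr hx) (by positivity)
  refine ⟨x + (r / ‖u‖) • u, r + δ / (2 * ‖u‖), by linarith, ?_, ball_subset_halfspace ?_⟩
  · rw [mem_ball, dist_eq_norm, sub_add_cancel_left, norm_neg, norm_smul,
      Real.norm_of_nonneg (by positivity), div_mul_cancel₀ _ hnu.ne']
    linarith
  · have hq : ⟪u, x + (r / ‖u‖) • u⟫ = ⟪u, x⟫ + r * ‖u‖ := by
      rw [inner_add_right, real_inner_smul_right, real_inner_self_eq_norm_sq]
      field_simp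
    have hs : (r + δ / (2 * ‖u‖)) * ‖u‖ = r * ‖u‖ + δ / 2 := by field_simp
    rw [hq, hs]
    linarith

theorem exists_eq_pair_halfspaces_of_forall_hasInfiniteCoverage [FiniteDimensional ℝ E]
    {L : Set (Set E)} (hdisj : L.Pairwise Disjoint) (hne : ∀ A ∈ L, A.Nonempty)
    (htwo : ∃ A ∈ L, ∃ B ∈ L, A ≠ B) (hcov : ∀ A ∈ L, ∀ x ∈ A, HasInfiniteCoverage A x) :
    ∃ e : E, ‖e‖ = 1 ∧ ∃ c d : ℝ, Disjoint {y | c < ⟪e, y⟫} {y | ⟪e, y⟫ < d} ∧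
      L = {{y | c < ⟪e, y⟫}, {y | ⟪e, y⟫ < d}} := by
  obtain ⟨A, hA, B, hB, hAB⟩ := htwo
  have hdAB := hdisj hA hB hAB
  obtain ⟨a₀, ha₀⟩ := hne A hA
  obtain ⟨b₀, hb₀⟩ := hne B hB
  obtain ⟨e, he, heA⟩ := exists_halfspace_subset_of_hasInfiniteCoverage (hcov A hA a₀ ha₀)
    (hdAB.notMem_of_mem_right hb₀)
  have hupB : ∀ b ∈ B, {y | ⟪-e, b⟫ < ⟪-e, y⟫} ⊆ B := fun b hb =>
    halfspace_subset_of_disjoint_of_halfspace_subset hdAB.symm (hcov B hB b hb) ha₀ he heA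
  have hup : ∀ C ∈ L, C ≠ B → ∀ x ∈ C, {y | ⟪e, x⟫ < ⟪e, y⟫} ⊆ C := fun C hC hCB x hx => by
    simpa only [neg_neg] using halfspace_subset_of_disjoint_of_halfspace_subset (hdisj hC hB hCB)
      (hcov C hC x hx) hb₀ (by rwa [norm_neg]) (hupB b₀ hb₀)
  have hL : L = {A, B} := by
    refine Subset.antisymm (fun C hC => ?_) (by simp [insert_subset_iff, hA, hB])
    by_contra hCAB
    simp only [mem_insert_iff, mem_singleton_iff, not_or] at hCAB
    obtain ⟨x, hx⟩ := hne C hC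
    -- `C` and `A` would contain disjoint halfspaces with the same normal `e`.
    have hee := congrArg (⟪e, ·⟫) <| eq_neg_of_disjoint_halfspaces he he
      ((hdisj hC hA hCAB.1).mono (hup C hC hCAB.2 x hx) heA)
    norm_num [inner_neg_right, real_inner_self_eq_norm_sq, he] at hee
  obtain ⟨c, rfl⟩ := exists_eq_halfspace he (isOpen_of_forall_hasInfiniteCoverage (hcov A hA))
    ⟨a₀, ha₀⟩ (hdAB.notMem_of_mem_right hb₀) (hup A hA hAB)
  obtain ⟨d, rfl⟩ := exists_eq_halfspace (by rwa [norm_neg])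
    (isOpen_of_forall_hasInfiniteCoverage (hcov B hB)) ⟨b₀, hb₀⟩ (hdAB.notMem_of_mem_left ha₀) hupB
  have hB : {y | d < ⟪-e, y⟫} = {y | ⟪e, y⟫ < -d} := by
    ext y; simp only [mem_ofPred_eq, inner_neg_left, lt_neg]
  rw [hB] at hdAB hL
  exact ⟨e, he, c, -d, hdAB, hL⟩

theorem exists_halfspaces_of_forall_hasInfiniteCoverage [FiniteDimensional ℝ E]
    {L : Set (Set E)} (hdisj : L.Pairwise Disjoint) (hne : ∀ A ∈ L, A.Nonempty)
    (htwo : ∃ A ∈ L, ∃ B ∈ L, A ≠ B) (hR : interior (univ \ ⋃₀ L) = ∅)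
    (hcov : ∀ A ∈ L, ∀ x ∈ A, HasInfiniteCoverage A x) :
    ∃ (u : E) (c : ℝ), u ≠ 0 ∧ L = {{y | ⟪u, y⟫ > c}, {y | ⟪u, y⟫ < c}} ∧
      univ \ ⋃₀ L = {y | ⟪u, y⟫ = c} := by
  obtain ⟨e, he, c, d, hdisj_cd, rfl⟩ :=
    exists_eq_pair_halfspaces_of_forall_hasInfiniteCoverage hdisj hne htwo hcov
  rw [sUnion_pair, ← compl_eq_univ_sdiff] at hR ⊢
  obtain rfl := eq_of_disjoint_halfspaces_of_interior_compl_eq_empty he hdisj_cd hR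
  refine ⟨e, c, ne_zero_of_norm_ne_zero (by simp [he]), rfl, ?_⟩
  ext y
  simp only [mem_compl_iff, mem_union, mem_ofPred_eq, not_or, not_lt]
  exact ⟨fun h => le_antisymm h.1 h.2, fun h => ⟨h.le, h.ge⟩⟩

end InnerProductSpace

theorem infinite_pointwise_coverage_iff_refined_linear_general
    (n : ℕ) (L : Set (Set (EuclideanSpace ℝ (Fin n))))
    (hdisj : L.Pairwise Disjoint)
    (hne : ∀ A ∈ L, A.Nonempty)
    (htwo : ∃ A ∈ L, ∃ B ∈ L, A ≠ B)
    (hnull : volume (Set.univ \ ⋃₀ L) = 0) :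
    (∀ A ∈ L, ∀ x ∈ A, ∀ r : ℝ, 0 < r →
      ∃ (q : EuclideanSpace ℝ (Fin n)) (s : ℝ), r < s ∧ x ∈ ball q s ∧ ball q s ⊆ A) ↔
    (∃ (u : EuclideanSpace ℝ (Fin n)) (c : ℝ), u ≠ 0 ∧
      L = {{y : EuclideanSpace ℝ (Fin n) | ⟪u, y⟫ > c},
           {y : EuclideanSpace ℝ (Fin n) | ⟪u, y⟫ < c}} ∧
      Set.univ \ ⋃₀ L = {y : EuclideanSpace ℝ (Fin n) | ⟪u, y⟫ = c}) := by
  refine ⟨exists_halfspaces_of_forall_hasInfiniteCoverage hdisj hne htwo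
    (Measure.interior_eq_empty_of_null hnull), ?_⟩
  rintro ⟨u, c, hu, rfl, -⟩ A hA x hx
  obtain rfl | rfl := hA
  · exact hasInfiniteCoverage_halfspace hu hx
  · have hlower : {y : EuclideanSpace ℝ (Fin n) | ⟪u, y⟫ < c} = {y | -c < ⟪-u, y⟫} := by
      ext y; simp only [mem_ofPred_eq, inner_neg_left, neg_lt_neg_iff]
    rw [hlower] at hx ⊢
    exact hasInfiniteCoverage_halfspace (neg_ne_zero.mpr hu) hx

/-- A non-trivial classifier has infinite pointwise coverage just in case it is a
refined linear classifier: for a collection `L` of pairwise disjoint nonempty subsets of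
`ℝⁿ` with at least two members whose complement `R = ℝⁿ \ ⋃L` is meagre and Lebesgue
null, every point of every label has anchors of arbitrarily large radius iff `L`
consists of the two open halfspaces determined by some hyperplane and `R` is that
hyperplane. -/
theorem infinite_pointwise_coverage_iff_refined_linear
    (n : ℕ) (hn : 1 ≤ n) (L : Set (Set (EuclideanSpace ℝ (Fin n))))
    (hdisj : L.Pairwise Disjoint)
    (hne : ∀ A ∈ L, A.Nonempty)
    (htwo : ∃ A ∈ L, ∃ B ∈ L, A ≠ B)
    (hmeagre : IsMeagre (Set.univ \ ⋃₀ L))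
    (hnull : volume (Set.univ \ ⋃₀ L) = 0) :
    (∀ A ∈ L, ∀ x ∈ A, ∀ r : ℝ, 0 < r →
      ∃ (q : EuclideanSpace ℝ (Fin n)) (s : ℝ), r < s ∧ x ∈ ball q s ∧ ball q s ⊆ A) ↔
    (∃ (u : EuclideanSpace ℝ (Fin n)) (c : ℝ), u ≠ 0 ∧
      L = {{y : EuclideanSpace ℝ (Fin n) | ⟪u, y⟫ > c},
           {y : EuclideanSpace ℝ (Fin n) | ⟪u, y⟫ < c}} ∧
      Set.univ \ ⋃₀ L = {y : EuclideanSpace ℝ (Fin n) | ⟪u, y⟫ = c}) :=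
  infinite_pointwise_coverage_iff_refined_linear_general n L hdisj hne htwo hnull
end

section
/- Let n ≥ 1 and let L be a collection of at least two pairwise disjoint nonempty subsets of ℝⁿ whose union is all of ℝⁿ. Then it is not the case that every point has infinite coverage: there exist a point x ∈ ℝⁿ and a real r₀ > 0 such that no open ball of radius greater than r₀ contains x and is contained in the member of L containing x. (No ordinary non-trivial classifier has infinite pointwise coverage.) -/
open Metric

/-- No ordinary non-trivial classifier has infinite pointwise coverage: if `L` is a
collection of at least two pairwise disjoint nonempty subsets of `ℝⁿ` whose union is all
of `ℝⁿ`, then some point `x` admits no anchor of radius greater than some `r₀ > 0`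
within the member of `L` containing it. -/
theorem ordinary_classifier_not_infinite_coverage
    (n : ℕ) (hn : 1 ≤ n) (L : Set (Set (EuclideanSpace ℝ (Fin n))))
    (hdisj : L.Pairwise Disjoint)
    (hne : ∀ A ∈ L, A.Nonempty)
    (htwo : ∃ A ∈ L, ∃ B ∈ L, A ≠ B)
    (hcover : ⋃₀ L = Set.univ) :
    ∃ (x : EuclideanSpace ℝ (Fin n)) (r₀ : ℝ), 0 < r₀ ∧
      ∀ A ∈ L, x ∈ A → ∀ (q : EuclideanSpace ℝ (Fin n)) (s : ℝ), r₀ < s →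
        ¬(x ∈ ball q s ∧ ball q s ⊆ A) := by
  obtain ⟨A, hA, B, hB, hAB⟩ := htwo
  obtain ⟨b, hb⟩ := hne B hB
  -- A is a nonempty proper subset, so its frontier is nonempty
  have hAne : A.Nonempty := hne A hA
  have hbA : b ∉ A := fun h => (hdisj hA hB hAB).le_bot ⟨h, hb⟩
  have hfr : (frontier A).Nonempty := by
    by_contra h
    rw [Set.not_nonempty_iff_eq_empty] at h
    have hclopen : IsClopen A := isClopen_iff_frontier_eq_empty.mpr h
    rcases isClopen_iff.mp hclopen with h1 | h1
    · exact hAne.ne_empty h1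
    · exact hbA (h1 ▸ Set.mem_univ b)
  obtain ⟨x, hx⟩ := hfr
  refine ⟨x, 1, one_pos, ?_⟩
  intro M hM hxM q s _ ⟨hxq, hsub⟩
  -- x is in the closure of Mᶜ
  have hxcl : x ∈ closure Mᶜ := by
    by_cases hMA : M = A
    · subst hMA; rw [closure_compl]; exact hx.2
    · have hsub' : A ⊆ Mᶜ := fun y hy hyM =>
        (hdisj hA hM (Ne.symm hMA)).le_bot ⟨hy, hyM⟩
      exact closure_mono hsub' hx.1
  obtain ⟨y, hy1, hy2⟩ := mem_closure_iff.mp hxcl (ball q s) isOpen_ball hxq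
  exact hy2 (hsub hy1)
end
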